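/- arXiv:2102.13480 — 4 statements merged into one kernel-verified Lean document; each statement's English description precedes it below -/
import Mathlib

section
/- Assume 0 < a < 1 and σ < σ_⋆. Then the equilibrium points of (LKS) lying in the closed half-plane {w ≥ 0} are exactly (0, v_⋆), (0, −v_⋆) and (w₃, v₃) = (λ − γσ²/(a−1)², σ/(a−1)), and w₃ > 0. The Jacobian matrix J(w,v) = [[(a−1)v − σ, (a−1)w], [−1/γ, −2v]] at (0, v_⋆) has the two negative eigenvalues (a−1)v_⋆ − σ and −2v_⋆; at (0, −v_⋆) it has the two positive eigenvalues −(a−1)v_⋆ − σ and 2v_⋆; and at (w₃, v₃) it has two real eigenvalues of opposite sign, namely x_{1,2} = −σ/(a−1) ∓ √(σ²/(a−1)² − ((a−1)/γ)(λ − γσ²/(a−1)²)), so (w₃, v₃) is a saddle point. -/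
/-!
The first equilibrium equation forces `w = 0` or `v = σ/(a-1)`, and the second one then fixes
the other coordinate. Squaring `0 < σ < σ⋆` gives `γσ²/(a-1)² < λ`, i.e. `w₃ > 0`. At `(w₃, v₃)`
the characteristic polynomial is `x² + 2v₃x + (a-1)w₃/γ`; its constant term, the product of the
eigenvalues, is negative, so the eigenvalues are real and of opposite sign.
-/

theorem det_fin_two_sub_smul_one (p q r s x : ℝ) :
    (!![p, q; r, s] - x • (1 : Matrix (Fin 2) (Fin 2) ℝ)).det = (p - x) * (s - x) - q * r := by
  simp [Matrix.det_fin_two]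

theorem quadratic_roots_of_neg_const {m d Δ : ℝ} (hd : d < 0) (hΔ : Δ = m ^ 2 - d) :
    0 < Δ ∧ m - √Δ < 0 ∧ 0 < m + √Δ ∧
      ∀ x : ℝ, (m - √Δ - x) * (m + √Δ - x) = x ^ 2 - 2 * m * x + d := by
  have hΔ_pos : 0 < Δ := by nlinarith [sq_nonneg m]
  have hm : |m| < √Δ := by
    rw [← Real.sqrt_sq_eq_abs]
    exact Real.sqrt_lt_sqrt (sq_nonneg m) (by linarith)
  refine ⟨hΔ_pos, by linarith [le_abs_self m], by linarith [neg_abs_le m], fun x => ?_⟩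
  linear_combination -Real.sq_sqrt hΔ_pos.le - hΔ

theorem equilibrium_iff {c σ γ lam vstar : ℝ} (hc : c ≠ 0) (hγ : γ ≠ 0)
    (hvstar : vstar ^ 2 = lam / γ) (p : ℝ × ℝ) :
    (p.1 * (c * p.2 - σ) = 0 ∧ lam / γ - p.2 ^ 2 - p.1 / γ = 0) ↔
      p = (0, vstar) ∨ p = (0, -vstar) ∨ p = (lam - γ * σ ^ 2 / c ^ 2, σ / c) := by
  obtain ⟨w, v⟩ := p
  simp only [Prod.mk.injEq]
  constructor
  · rintro ⟨hw, hv⟩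
    rcases mul_eq_zero.1 hw with rfl | hv₃
    · have : (v - vstar) * (v + vstar) = 0 := by linear_combination -hvstar - hv
      rcases mul_eq_zero.1 this with h | h
      · exact Or.inl ⟨rfl, by linarith⟩
      · exact Or.inr (Or.inl ⟨rfl, by linarith⟩)
    · have hv₃ : v = σ / c := by field_simp; linarith
      subst hv₃
      refine Or.inr (Or.inr ⟨?_, rfl⟩)
      field_simp at hv ⊢
      linear_combination -hv
  · rintro (⟨rfl, rfl⟩ | ⟨rfl, rfl⟩ | ⟨rfl, rfl⟩)
    · constructor <;> [ring; (rw [hvstar]; ring)]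
    · constructor <;> [ring; (rw [neg_sq, hvstar]; ring)]
    · constructor <;> [(rw [mul_div_cancel₀ _ hc]; ring); (field_simp; ring)]

theorem interior_equilibrium_pos {c σ γ lam vstar : ℝ} (hc : c ≠ 0) (hγ : 0 < γ) (hσ : 0 ≤ σ)
    (hσv : σ < |c| * vstar) (hvstar : vstar ^ 2 = lam / γ) :
    0 < lam - γ * σ ^ 2 / c ^ 2 := by
  have hsq : σ ^ 2 < c ^ 2 * (lam / γ) := by
    simpa [mul_pow, sq_abs, hvstar] using pow_lt_pow_left₀ hσv hσ two_ne_zero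
  rw [sub_pos, div_lt_iff₀ (by positivity)]
  calc γ * σ ^ 2 < γ * (c ^ 2 * (lam / γ)) := mul_lt_mul_of_pos_left hsq hγ
    _ = lam * c ^ 2 := by field_simp

theorem stmt2_general (a σ γ lam vstar : ℝ)
    (ha1 : a < 1) (hσ : 0 < σ) (hγ : 0 < γ)
    (hvstar : vstar = Real.sqrt (lam / γ))
    (hσs : σ < |1 - a| * vstar) :
    -- the equilibrium points in {w ≥ 0} are exactly the three stated points
    (∀ p : ℝ × ℝ, 0 ≤ p.1 →
      ((p.1 * ((a - 1) * p.2 - σ) = 0 ∧ lam / γ - p.2 ^ 2 - p.1 / γ = 0) ↔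
        (p = (0, vstar) ∨ p = (0, -vstar) ∨
          p = (lam - γ * σ ^ 2 / (a - 1) ^ 2, σ / (a - 1))))) ∧
    -- w₃ > 0
    0 < lam - γ * σ ^ 2 / (a - 1) ^ 2 ∧
    -- at (0, v⋆): the two eigenvalues (a−1)v⋆ − σ and −2v⋆ are negative
    ((a - 1) * vstar - σ < 0 ∧ -2 * vstar < 0 ∧
      (∀ x : ℝ,
        (!![(a - 1) * vstar - σ, (a - 1) * 0; -(1 / γ), -2 * vstar]
            - x • (1 : Matrix (Fin 2) (Fin 2) ℝ)).det
          = ((a - 1) * vstar - σ - x) * (-2 * vstar - x))) ∧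
    -- at (0, −v⋆): the two eigenvalues −(a−1)v⋆ − σ and 2v⋆ are positive
    (0 < -(a - 1) * vstar - σ ∧ 0 < 2 * vstar ∧
      (∀ x : ℝ,
        (!![(a - 1) * (-vstar) - σ, (a - 1) * 0; -(1 / γ), -2 * (-vstar)]
            - x • (1 : Matrix (Fin 2) (Fin 2) ℝ)).det
          = (-(a - 1) * vstar - σ - x) * (2 * vstar - x))) ∧
    -- at (w₃, v₃): two real eigenvalues x₁ < 0 < x₂ (saddle point)
    (let Δ : ℝ := σ ^ 2 / (a - 1) ^ 2 -
        ((a - 1) / γ) * (lam - γ * σ ^ 2 / (a - 1) ^ 2);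
     let x1 : ℝ := -σ / (a - 1) - Real.sqrt Δ;
     let x2 : ℝ := -σ / (a - 1) + Real.sqrt Δ;
     0 < Δ ∧ x1 < 0 ∧ 0 < x2 ∧
      (∀ x : ℝ,
        (!![(a - 1) * (σ / (a - 1)) - σ, (a - 1) * (lam - γ * σ ^ 2 / (a - 1) ^ 2);
            -(1 / γ), -2 * (σ / (a - 1))]
            - x • (1 : Matrix (Fin 2) (Fin 2) ℝ)).det
          = (x1 - x) * (x2 - x))) := by
  have hc : a - 1 < 0 := by linarith
  have hσv : σ < (1 - a) * vstar := by rwa [abs_of_pos (by linarith)] at hσs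
  have hvstar_pos : 0 < vstar := pos_of_mul_pos_right (hσ.trans hσs) (abs_nonneg _)
  have hvstar_sq : vstar ^ 2 = lam / γ := by
    rw [hvstar] at hvstar_pos ⊢
    exact Real.sq_sqrt (Real.sqrt_pos.mp hvstar_pos).le
  have hw₃ : 0 < lam - γ * σ ^ 2 / (a - 1) ^ 2 :=
    interior_equilibrium_pos hc.ne hγ hσ.le (by rwa [abs_sub_comm] at hσs) hvstar_sq
  refine ⟨fun p _ => equilibrium_iff hc.ne hγ.ne' hvstar_sq p, hw₃,
    ⟨by nlinarith, by linarith, fun x => by rw [det_fin_two_sub_smul_one]; ring⟩,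
    ⟨by nlinarith, by linarith, fun x => by rw [det_fin_two_sub_smul_one]; ring⟩, ?_⟩
  obtain ⟨hΔ, hx₁, hx₂, hfactor⟩ := quadratic_roots_of_neg_const
    (mul_neg_of_neg_of_pos (div_neg_of_neg_of_pos hc hγ) hw₃)
    (show _ = (-σ / (a - 1)) ^ 2 - _ by rw [div_pow, neg_sq])
  refine ⟨hΔ, hx₁, hx₂, fun x => ?_⟩
  rw [hfactor, det_fin_two_sub_smul_one, mul_div_cancel₀ _ hc.ne]
  ring

/-- For `0 < a < 1` and `σ < σ⋆`: equilibria of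
`w' = w((a−1)v − σ)`, `v' = λ/γ − v² − w/γ` in `{w ≥ 0}` are exactly
`(0, v⋆)`, `(0, −v⋆)` and `(w₃, v₃) = (λ − γσ²/(a−1)², σ/(a−1))` with `w₃ > 0`;
eigenvalue description of the Jacobian at the three points; in particular
`(w₃, v₃)` is a saddle (two real eigenvalues of opposite sign). -/
theorem stmt2 (a σ γ lam vstar : ℝ)
    (ha0 : 0 < a) (ha1 : a < 1) (hσ : 0 < σ) (hγ : 0 < γ) (hlam : 0 < lam)
    (hvstar : vstar = Real.sqrt (lam / γ))
    (hσs : σ < |1 - a| * vstar) :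
    -- the equilibrium points in {w ≥ 0} are exactly the three stated points
    (∀ p : ℝ × ℝ, 0 ≤ p.1 →
      ((p.1 * ((a - 1) * p.2 - σ) = 0 ∧ lam / γ - p.2 ^ 2 - p.1 / γ = 0) ↔
        (p = (0, vstar) ∨ p = (0, -vstar) ∨
          p = (lam - γ * σ ^ 2 / (a - 1) ^ 2, σ / (a - 1))))) ∧
    -- w₃ > 0
    0 < lam - γ * σ ^ 2 / (a - 1) ^ 2 ∧
    -- at (0, v⋆): the two eigenvalues (a−1)v⋆ − σ and −2v⋆ are negative
    ((a - 1) * vstar - σ < 0 ∧ -2 * vstar < 0 ∧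
      (∀ x : ℝ,
        (!![(a - 1) * vstar - σ, (a - 1) * 0; -(1 / γ), -2 * vstar]
            - x • (1 : Matrix (Fin 2) (Fin 2) ℝ)).det
          = ((a - 1) * vstar - σ - x) * (-2 * vstar - x))) ∧
    -- at (0, −v⋆): the two eigenvalues −(a−1)v⋆ − σ and 2v⋆ are positive
    (0 < -(a - 1) * vstar - σ ∧ 0 < 2 * vstar ∧
      (∀ x : ℝ,
        (!![(a - 1) * (-vstar) - σ, (a - 1) * 0; -(1 / γ), -2 * (-vstar)]
            - x • (1 : Matrix (Fin 2) (Fin 2) ℝ)).det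
          = (-(a - 1) * vstar - σ - x) * (2 * vstar - x))) ∧
    -- at (w₃, v₃): two real eigenvalues x₁ < 0 < x₂ (saddle point)
    (let Δ : ℝ := σ ^ 2 / (a - 1) ^ 2 -
        ((a - 1) / γ) * (lam - γ * σ ^ 2 / (a - 1) ^ 2);
     let x1 : ℝ := -σ / (a - 1) - Real.sqrt Δ;
     let x2 : ℝ := -σ / (a - 1) + Real.sqrt Δ;
     0 < Δ ∧ x1 < 0 ∧ 0 < x2 ∧
      (∀ x : ℝ,
        (!![(a - 1) * (σ / (a - 1)) - σ, (a - 1) * (lam - γ * σ ^ 2 / (a - 1) ^ 2);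
            -(1 / γ), -2 * (σ / (a - 1))]
            - x • (1 : Matrix (Fin 2) (Fin 2) ℝ)).det
          = (x1 - x) * (x2 - x))) :=
  stmt2_general a σ γ lam vstar ha1 hσ hγ hvstar hσs
end

section
/- Assume a > 1 and σ < σ_⋆. Then the equilibrium points of (LKS) lying in the closed half-plane {w ≥ 0} are exactly (0, v_⋆), (0, −v_⋆) and (w₃, v₃) = (λ − γσ²/(a−1)², σ/(a−1)), with w₃ > 0. The Jacobian matrix J(w,v) = [[(a−1)v − σ, (a−1)w], [−1/γ, −2v]] at (0, v_⋆) has eigenvalues (a−1)v_⋆ − σ > 0 and −2v_⋆ < 0 (saddle), with eigenvector (0, 1) for the negative eigenvalue and eigenvector (γ(−(1+a)v_⋆ + σ), 1) for the positive eigenvalue; at (0, −v_⋆) it has eigenvalues −(a−1)v_⋆ − σ < 0 and 2v_⋆ > 0 (saddle), with eigenvector (γ((1+a)v_⋆ + σ), 1) for the negative eigenvalue and eigenvector (0, 1) for the positive eigenvalue; and at (w₃, v₃) both eigenvalues have negative real part. -/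
/-!
Equilibria: either `w = 0`, and then `v² = λ/γ = v⋆²`, or `v = σ/(a−1)`, and then
`w = λ − γv²`. Since `0 < σ/(a−1) < v⋆`, this makes `w₃ = γ(v⋆² − (σ/(a−1))²)` positive.
On the axis `w = 0` the Jacobian is lower triangular, so its eigenvalues are its diagonal entries. At `(w₃, v₃)` its trace is `−2σ/(a−1) < 0` and its
determinant is `(a−1)w₃/γ > 0`, so both roots of the characteristic polynomial lie in the open
left half-plane.
-/

open Matrix

theorem Complex.re_neg_of_sq_add_mul_add_eq_zero {b c : ℝ} (hb : 0 < b) (hc : 0 < c) {z : ℂ}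
    (hz : z ^ 2 + b * z + c = 0) : z.re < 0 := by
  obtain ⟨x, y⟩ := z
  simp only [Complex.ext_iff, pow_two, Complex.mul_re, Complex.mul_im, Complex.add_re,
    Complex.add_im, Complex.ofReal_re, Complex.ofReal_im, Complex.zero_re,
    Complex.zero_im] at hz
  obtain ⟨hre, him⟩ := hz
  show x < 0
  have : y * (2 * x + b) = 0 := by linear_combination him
  rcases mul_eq_zero.mp this with rfl | hx
  · nlinarith
  · linarith

/-- Routh–Hurwitz for `2 × 2` real matrices. -/
theorem Matrix.re_neg_of_det_map_sub_smul_eq_zero {A : Matrix (Fin 2) (Fin 2) ℝ}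
    (htr : A.trace < 0) (hdet : 0 < A.det) {z : ℂ}
    (hz : (A.map Complex.ofReal - z • (1 : Matrix (Fin 2) (Fin 2) ℂ)).det = 0) : z.re < 0 := by
  refine Complex.re_neg_of_sq_add_mul_add_eq_zero (neg_pos.2 htr) hdet ?_
  rw [← hz, det_fin_two, det_fin_two, trace_fin_two]
  simp only [sub_apply, map_apply, smul_apply, one_apply, if_true, zero_ne_one, one_ne_zero,
    if_false, smul_eq_mul, mul_one, mul_zero]
  push_cast
  ring

section LowerTriangular

variable {R : Type*} [CommRing R] (p r s : R)

theorem Matrix.det_lowerTriangular_sub_smul_one (x : R) :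
    (!![p, 0; r, s] - x • (1 : Matrix (Fin 2) (Fin 2) R)).det = (p - x) * (s - x) := by
  rw [one_fin_two, det_fin_two]
  simp

theorem Matrix.lowerTriangular_mulVec_single_one :
    !![p, 0; r, s] *ᵥ ![0, 1] = s • ![0, 1] := by
  ext i; fin_cases i <;> simp [mulVec, dotProduct, Fin.sum_univ_two]

theorem Matrix.lowerTriangular_mulVec_of_mul_add_eq {x : R} (h : r * x + s = p) :
    !![p, 0; r, s] *ᵥ ![x, 1] = p • ![x, 1] := by
  ext i; fin_cases i <;> simp [mulVec, dotProduct, Fin.sum_univ_two, h]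

end LowerTriangular

theorem lks_equilibrium_iff {a σ γ lam vstar : ℝ} (hγ : γ ≠ 0) (ha : a - 1 ≠ 0)
    (hvstar : vstar ^ 2 = lam / γ) (w v : ℝ) :
    (w * ((a - 1) * v - σ) = 0 ∧ lam / γ - v ^ 2 - w / γ = 0) ↔
      ((w, v) = (0, vstar) ∨ (w, v) = (0, -vstar) ∨
        (w, v) = (lam - γ * σ ^ 2 / (a - 1) ^ 2, σ / (a - 1))) := by
  have hw : lam / γ - v ^ 2 - w / γ = 0 ↔ w = lam - γ * v ^ 2 := by
    rw [sub_sub, sub_eq_zero, eq_comm, ← eq_sub_iff_add_eq', div_eq_iff hγ, sub_mul,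
      div_mul_cancel₀ _ hγ, mul_comm]
  have hv : (a - 1) * v - σ = 0 ↔ v = σ / (a - 1) := by
    rw [eq_div_iff ha, sub_eq_zero, mul_comm]
  simp only [Prod.mk.injEq, mul_eq_zero, hw, hv]
  constructor
  · rintro ⟨rfl | rfl, h⟩
    · have : v ^ 2 = vstar ^ 2 := by rw [hvstar]; field_simp; linarith
      rcases sq_eq_sq_iff_eq_or_eq_neg.mp this with rfl | rfl <;> simp
    · refine Or.inr (Or.inr ⟨?_, rfl⟩)
      rw [h, div_pow, mul_div_assoc]
  · rintro (⟨rfl, rfl⟩ | ⟨rfl, rfl⟩ | ⟨rfl, rfl⟩)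
    · simp [hvstar, mul_div_cancel₀ _ hγ]
    · simp [hvstar, mul_div_cancel₀ _ hγ]
    · exact ⟨Or.inr rfl, by rw [div_pow, mul_div_assoc]⟩

theorem stmt3_general (a σ γ lam vstar : ℝ)
    (ha : 1 < a) (hσ : 0 < σ) (hγ : 0 < γ)
    (hvstar : vstar = Real.sqrt (lam / γ))
    (hσs : σ < |1 - a| * vstar) :
    -- the equilibrium points in {w ≥ 0} are exactly the three stated points
    (∀ p : ℝ × ℝ, 0 ≤ p.1 →
      ((p.1 * ((a - 1) * p.2 - σ) = 0 ∧ lam / γ - p.2 ^ 2 - p.1 / γ = 0) ↔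
        (p = (0, vstar) ∨ p = (0, -vstar) ∨
          p = (lam - γ * σ ^ 2 / (a - 1) ^ 2, σ / (a - 1))))) ∧
    -- w₃ > 0
    0 < lam - γ * σ ^ 2 / (a - 1) ^ 2 ∧
    -- at (0, v⋆): eigenvalues (a−1)v⋆ − σ > 0 and −2v⋆ < 0 (saddle), with
    -- eigenvector (0,1) for the negative one and (γ(−(1+a)v⋆+σ),1) for the positive one
    (0 < (a - 1) * vstar - σ ∧ -2 * vstar < 0 ∧
      (∀ x : ℝ,
        (!![(a - 1) * vstar - σ, (a - 1) * 0; -(1 / γ), -2 * vstar]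
            - x • (1 : Matrix (Fin 2) (Fin 2) ℝ)).det
          = ((a - 1) * vstar - σ - x) * (-2 * vstar - x)) ∧
      ((!![(a - 1) * vstar - σ, (a - 1) * 0; -(1 / γ), -2 * vstar]).mulVec
          ![(0 : ℝ), 1] = (-2 * vstar) • ![(0 : ℝ), 1]) ∧
      ((!![(a - 1) * vstar - σ, (a - 1) * 0; -(1 / γ), -2 * vstar]).mulVec
          ![γ * (-(1 + a) * vstar + σ), 1]
        = ((a - 1) * vstar - σ) • ![γ * (-(1 + a) * vstar + σ), 1])) ∧
    -- at (0, −v⋆): eigenvalues −(a−1)v⋆ − σ < 0 and 2v⋆ > 0 (saddle), with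
    -- eigenvector (γ((1+a)v⋆+σ),1) for the negative one and (0,1) for the positive one
    (-(a - 1) * vstar - σ < 0 ∧ 0 < 2 * vstar ∧
      (∀ x : ℝ,
        (!![(a - 1) * (-vstar) - σ, (a - 1) * 0; -(1 / γ), -2 * (-vstar)]
            - x • (1 : Matrix (Fin 2) (Fin 2) ℝ)).det
          = (-(a - 1) * vstar - σ - x) * (2 * vstar - x)) ∧
      ((!![(a - 1) * (-vstar) - σ, (a - 1) * 0; -(1 / γ), -2 * (-vstar)]).mulVec
          ![γ * ((1 + a) * vstar + σ), 1]
        = (-(a - 1) * vstar - σ) • ![γ * ((1 + a) * vstar + σ), 1]) ∧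
      ((!![(a - 1) * (-vstar) - σ, (a - 1) * 0; -(1 / γ), -2 * (-vstar)]).mulVec
          ![(0 : ℝ), 1] = (2 * vstar) • ![(0 : ℝ), 1])) ∧
    -- at (w₃, v₃): every (complex) eigenvalue of the Jacobian has negative real part
    (∀ z : ℂ,
      ((!![(a - 1) * (σ / (a - 1)) - σ, (a - 1) * (lam - γ * σ ^ 2 / (a - 1) ^ 2);
          -(1 / γ), -2 * (σ / (a - 1))]).map Complex.ofReal
          - z • (1 : Matrix (Fin 2) (Fin 2) ℂ)).det = 0 → z.re < 0) := by
  have ha1 : 0 < a - 1 := sub_pos.2 ha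
  rw [abs_sub_comm, abs_of_pos ha1] at hσs
  have hv : 0 < vstar := pos_of_mul_pos_right (hσ.trans hσs) ha1.le
  have hvsq : vstar ^ 2 = lam / γ := by
    rw [hvstar, Real.sq_sqrt (Real.sqrt_pos.1 (hvstar ▸ hv)).le]
  have hv3 : σ / (a - 1) < vstar := (div_lt_iff₀' ha1).2 hσs
  have hw3 : 0 < lam - γ * σ ^ 2 / (a - 1) ^ 2 := by
    have : lam - γ * σ ^ 2 / (a - 1) ^ 2 = γ * (vstar ^ 2 - (σ / (a - 1)) ^ 2) := by
      rw [hvsq, div_pow]; field_simp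
    rw [this]
    exact mul_pos hγ (sub_pos.2 (pow_lt_pow_left₀ hv3 (by positivity) two_ne_zero))
  have hvec₁ : -(1 / γ) * (γ * (-(1 + a) * vstar + σ)) + -2 * vstar = (a - 1) * vstar - σ := by
    field_simp; ring
  have hvec₂ : -(1 / γ) * (γ * ((1 + a) * vstar + σ)) + 2 * vstar = -((a - 1) * vstar) - σ := by
    field_simp; ring
  refine ⟨fun p _ ↦ lks_equilibrium_iff hγ.ne' ha1.ne' hvsq p.1 p.2, hw3,
    ⟨by linarith, by linarith, ?_⟩, ⟨by nlinarith, by linarith, ?_⟩, ?_⟩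
  · simp only [mul_zero]
    exact ⟨det_lowerTriangular_sub_smul_one _ _ _, lowerTriangular_mulVec_single_one _ _ _,
      lowerTriangular_mulVec_of_mul_add_eq _ _ _ hvec₁⟩
  · simp only [mul_zero, mul_neg, neg_mul, neg_neg]
    exact ⟨det_lowerTriangular_sub_smul_one _ _ _, lowerTriangular_mulVec_of_mul_add_eq _ _ _ hvec₂,
      lowerTriangular_mulVec_single_one _ _ _⟩
  · refine fun z ↦ re_neg_of_det_map_sub_smul_eq_zero ?_ ?_
    · rw [trace_fin_two_of, mul_div_cancel₀ _ ha1.ne']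
      linarith [div_pos hσ ha1]
    · rw [det_fin_two_of, mul_div_cancel₀ _ ha1.ne', sub_self, zero_mul, zero_sub, mul_neg,
        neg_neg]
      exact mul_pos (mul_pos ha1 hw3) (by positivity)

/-- For `a > 1` and `σ < σ⋆`: equilibria of
`w' = w((a−1)v − σ)`, `v' = λ/γ − v² − w/γ` in `{w ≥ 0}` are exactly
`(0, v⋆)`, `(0, −v⋆)` and `(w₃, v₃)` with `w₃ > 0`; the first two are saddle
points with the stated eigenvalues and eigenvectors, and at `(w₃, v₃)` both
eigenvalues of the Jacobian have negative real part. -/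
theorem stmt3 (a σ γ lam vstar : ℝ)
    (ha : 1 < a) (hσ : 0 < σ) (hγ : 0 < γ) (hlam : 0 < lam)
    (hvstar : vstar = Real.sqrt (lam / γ))
    (hσs : σ < |1 - a| * vstar) :
    -- the equilibrium points in {w ≥ 0} are exactly the three stated points
    (∀ p : ℝ × ℝ, 0 ≤ p.1 →
      ((p.1 * ((a - 1) * p.2 - σ) = 0 ∧ lam / γ - p.2 ^ 2 - p.1 / γ = 0) ↔
        (p = (0, vstar) ∨ p = (0, -vstar) ∨
          p = (lam - γ * σ ^ 2 / (a - 1) ^ 2, σ / (a - 1))))) ∧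
    -- w₃ > 0
    0 < lam - γ * σ ^ 2 / (a - 1) ^ 2 ∧
    -- at (0, v⋆): eigenvalues (a−1)v⋆ − σ > 0 and −2v⋆ < 0 (saddle), with
    -- eigenvector (0,1) for the negative one and (γ(−(1+a)v⋆+σ),1) for the positive one
    (0 < (a - 1) * vstar - σ ∧ -2 * vstar < 0 ∧
      (∀ x : ℝ,
        (!![(a - 1) * vstar - σ, (a - 1) * 0; -(1 / γ), -2 * vstar]
            - x • (1 : Matrix (Fin 2) (Fin 2) ℝ)).det
          = ((a - 1) * vstar - σ - x) * (-2 * vstar - x)) ∧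
      ((!![(a - 1) * vstar - σ, (a - 1) * 0; -(1 / γ), -2 * vstar]).mulVec
          ![(0 : ℝ), 1] = (-2 * vstar) • ![(0 : ℝ), 1]) ∧
      ((!![(a - 1) * vstar - σ, (a - 1) * 0; -(1 / γ), -2 * vstar]).mulVec
          ![γ * (-(1 + a) * vstar + σ), 1]
        = ((a - 1) * vstar - σ) • ![γ * (-(1 + a) * vstar + σ), 1])) ∧
    -- at (0, −v⋆): eigenvalues −(a−1)v⋆ − σ < 0 and 2v⋆ > 0 (saddle), with
    -- eigenvector (γ((1+a)v⋆+σ),1) for the negative one and (0,1) for the positive one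
    (-(a - 1) * vstar - σ < 0 ∧ 0 < 2 * vstar ∧
      (∀ x : ℝ,
        (!![(a - 1) * (-vstar) - σ, (a - 1) * 0; -(1 / γ), -2 * (-vstar)]
            - x • (1 : Matrix (Fin 2) (Fin 2) ℝ)).det
          = (-(a - 1) * vstar - σ - x) * (2 * vstar - x)) ∧
      ((!![(a - 1) * (-vstar) - σ, (a - 1) * 0; -(1 / γ), -2 * (-vstar)]).mulVec
          ![γ * ((1 + a) * vstar + σ), 1]
        = (-(a - 1) * vstar - σ) • ![γ * ((1 + a) * vstar + σ), 1]) ∧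
      ((!![(a - 1) * (-vstar) - σ, (a - 1) * 0; -(1 / γ), -2 * (-vstar)]).mulVec
          ![(0 : ℝ), 1] = (2 * vstar) • ![(0 : ℝ), 1])) ∧
    -- at (w₃, v₃): every (complex) eigenvalue of the Jacobian has negative real part
    (∀ z : ℂ,
      ((!![(a - 1) * (σ / (a - 1)) - σ, (a - 1) * (lam - γ * σ ^ 2 / (a - 1) ^ 2);
          -(1 / γ), -2 * (σ / (a - 1))]).map Complex.ofReal
          - z • (1 : Matrix (Fin 2) (Fin 2) ℂ)).det = 0 → z.re < 0) :=
  stmt3_general a σ γ lam vstar ha hσ hγ hvstar hσs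
end

section
/- Let a > 0, v₀ > v_⋆, w₀ > 0 and s₀ ∈ ℝ, and let (w, v) be a maximal solution of (LKS) on (s_−, s_+) with w(s₀) = w₀, v(s₀) = v₀. Then s_− is finite, v(s) → +∞ as s → s_−⁺, and as s → s_−⁺: w(s) → +∞ if a < 1; w(s) converges to a finite positive limit if a = 1; and w(s) → 0 if a > 1. -/
open Set Filter Topology

/-- A positive solution of the linear-diffusion traveling-wave system (LKS)
`w' = w((a−1)v − σ)`, `v' = λ/γ − v² − w/γ` on the open interval
`(sm, sp)` (endpoints in `EReal`). -/
def IsLKSSol (a σ γ lam : ℝ) (sm sp : EReal) (w v : ℝ → ℝ) : Prop :=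
  sm < sp ∧
  ∀ s : ℝ, sm < (s : EReal) → (s : EReal) < sp →
    0 < w s ∧
    HasDerivAt w (w s * ((a - 1) * v s - σ)) s ∧
    HasDerivAt v (lam / γ - v s ^ 2 - w s / γ) s

/-- A maximal positive solution of (LKS): it cannot be extended to a solution
with `w > 0` on any strictly larger open interval. -/
def IsMaxLKSSol (a σ γ lam : ℝ) (sm sp : EReal) (w v : ℝ → ℝ) : Prop :=
  IsLKSSol a σ γ lam sm sp w v ∧
  ∀ (tm tp : EReal) (w₁ v₁ : ℝ → ℝ),
    tm ≤ sm → sp ≤ tp → (tm < sm ∨ sp < tp) →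
    (∀ s : ℝ, sm < (s : EReal) → (s : EReal) < sp → w₁ s = w s ∧ v₁ s = v s) →
    ¬ IsLKSSol a σ γ lam tm tp w₁ v₁

/-!
For `v > v⋆` the quantity `y = 1 / (v - v⋆)` solves the Riccati equation
`y' = 1 + 2 v⋆ y + (w / γ) y² ≥ 1`, and `v` can cross the level `v⋆` only downwards. Going back
from `s₀`, `y` therefore stays positive while decreasing at least linearly, so `s₋ ≥ s₀ - y(s₀)`
is finite and `y` has a limit `L ≥ 0` at `s₋⁺`. If `L > 0`, then `v` stays bounded, `log w` has
bounded derivative and `(w, v)` converges to a point with `w > 0`; by Picard–Lindelöf the solution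
continues past `s₋`, contradicting maximality. Hence `y → 0⁺`, i.e. `v → +∞`.

For `w`: `log (w y)` has derivative bounded below, so `w y` is bounded, and then
`ζ = log w + (1 - a) log y` has bounded derivative `(1 - a) v⋆ - σ + (1 - a) w y / γ`, so it
converges. As `log w = ζ + (a - 1) log y` with `log y → -∞`, the sign of `a - 1` decides the limit.
-/

theorem mul_sub_le_image_sub_of_le_hasDerivAt {f f' : ℝ → ℝ} {x y C : ℝ} (hxy : x ≤ y)
    (hf : ∀ t ∈ Icc x y, HasDerivAt f (f' t) t) (hC : ∀ t ∈ Ioo x y, C ≤ f' t) :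
    C * (y - x) ≤ f y - f x := by
  rcases hxy.eq_or_lt with rfl | hlt
  · simp
  obtain ⟨c, hc, hslope⟩ := exists_hasDerivAt_eq_slope f f' hlt
    (fun t ht => (hf t ht).continuousAt.continuousWithinAt)
    (fun t ht => hf t (Ioo_subset_Icc_self ht))
  rw [← le_div_iff₀ (sub_pos.2 hlt), ← hslope]
  exact hC c hc

theorem exists_tendsto_nhdsGT_of_abs_hasDerivAt_le {f f' : ℝ → ℝ} {a b K : ℝ} (hab : a < b)
    (hf : ∀ t ∈ Ioo a b, HasDerivAt f (f' t) t) (hK : ∀ t ∈ Ioo a b, |f' t| ≤ K) :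
    ∃ L, Tendsto f (𝓝[>] a) (𝓝 L) := by
  have hlip : LipschitzOnWith K.toNNReal f (Ioo a b) :=
    (convex_Ioo a b).lipschitzOnWith_of_nnnorm_hasDerivWithin_le
      (fun t ht => (hf t ht).hasDerivWithinAt) fun t ht => by
        rw [← NNReal.coe_le_coe, coe_nnnorm, Real.coe_toNNReal']
        exact le_max_of_le_left (hK t ht)
  obtain ⟨g, hg, hfg⟩ := hlip.extend_real
  refine ⟨g a, (hg.continuous.tendsto a).mono_left nhdsWithin_le_nhds |>.congr' ?_⟩
  filter_upwards [Ioo_mem_nhdsGT hab] with t ht using (hfg ht).symm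

theorem exists_hasDerivAt_extend_left {E : Type*} [NormedAddCommGroup E] [NormedSpace ℝ E]
    [CompleteSpace E] {F : E → E} {W : ℝ → E} {x₀ : E} {b c : ℝ} (hF : ContDiffAt ℝ 1 F x₀)
    (hbc : b < c) (hW : ∀ s ∈ Ioo b c, HasDerivAt W (F (W s)) s)
    (hlim : Tendsto W (𝓝[>] b) (𝓝 x₀)) :
    ∃ W' : ℝ → E, W' b = x₀ ∧ (∀ s, b < s → W' s = W s) ∧
      ∃ ε > 0, ∀ s ∈ Ioo (b - ε) c, HasDerivAt W' (F (W' s)) s := by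
  obtain ⟨u, hu0, ε, hε, hu⟩ :=
    hF.exists_forall_mem_closedBall_exists_eq_forall_mem_Ioo_hasDerivAt₀ b
  -- `u` and `W` have the same one-sided derivative `F x₀` at `b`, so gluing them needs no
  -- uniqueness theorem
  set W' : ℝ → E := fun s => if b < s then W s else u s
  have hW'W : ∀ s, b < s → W' s = W s := fun s hs => if_pos hs
  have hW'u : ∀ s, s ≤ b → W' s = u s := fun s hs => if_neg hs.not_gt
  have hbb : b ∈ Ioo (b - ε) (b + ε) := ⟨by linarith, by linarith⟩
  refine ⟨W', by rw [hW'u b le_rfl, hu0], hW'W, ε, hε, fun s hs => ?_⟩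
  rcases lt_trichotomy s b with hsb | rfl | hbs
  · rw [hW'u s hsb.le]
    refine (hu s ⟨hs.1, by linarith⟩).congr_of_eventuallyEq ?_
    filter_upwards [Iio_mem_nhds hsb] with t ht using hW'u t ht.le
  · have hleft : HasDerivWithinAt W' (F x₀) (Iic s) s := by
      rw [← hu0]
      exact (hu s hbb).hasDerivWithinAt.congr (fun t ht => hW'u t ht) (hW'u s le_rfl)
    have hright : HasDerivWithinAt W' (F x₀) (Ici s) s := by
      have hderiv : ∀ t ∈ Ioo s c, HasDerivAt W' (F (W t)) t := fun t ht =>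
        (hW t ht).congr_of_eventuallyEq <| by
          filter_upwards [Ioi_mem_nhds ht.1] with r hr using hW'W r hr
      refine hasDerivWithinAt_Ici_of_tendsto_deriv
        (fun t ht => (hderiv t ht).differentiableAt.differentiableWithinAt) ?_
        (Ioo_mem_nhdsGT hs.2) ?_
      · show Tendsto W' _ _
        rw [hW'u s le_rfl, hu0]
        refine (hlim.mono_left (nhdsWithin_mono _ Ioo_subset_Ioi_self)).congr' ?_
        filter_upwards [self_mem_nhdsWithin] with t ht using (hW'W t ht.1).symm
      · refine (hF.continuousAt.tendsto.comp hlim).congr' ?_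
        filter_upwards [Ioo_mem_nhdsGT hs.2] with t ht using (hderiv t ht).deriv.symm
    rw [hW'u s le_rfl, hu0, ← hasDerivWithinAt_univ, ← Iic_union_Ici]
    exact hleft.union hright
  · rw [hW'W s hbs]
    refine (hW s ⟨hbs, hs.2⟩).congr_of_eventuallyEq ?_
    filter_upwards [Ioi_mem_nhds hbs] with t ht using hW'W t ht

noncomputable def lksField (a σ γ lam : ℝ) (p : ℝ × ℝ) : ℝ × ℝ :=
  (p.1 * ((a - 1) * p.2 - σ), lam / γ - p.2 ^ 2 - p.1 / γ)

theorem contDiff_lksField (a σ γ lam : ℝ) {n : WithTop ℕ∞} :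
    ContDiff ℝ n (lksField a σ γ lam) := by
  unfold lksField
  fun_prop

theorem hasDerivAt_prod_lksField_iff {a σ γ lam s : ℝ} {w v : ℝ → ℝ} :
    HasDerivAt (fun t => (w t, v t)) (lksField a σ γ lam (w s, v s)) s ↔
      HasDerivAt w (w s * ((a - 1) * v s - σ)) s ∧ HasDerivAt v (lam / γ - v s ^ 2 - w s / γ) s :=
  ⟨fun h => ⟨(hasFDerivAt_fst.comp_hasDerivAt s h :), (hasFDerivAt_snd.comp_hasDerivAt s h :)⟩,
    fun h => h.1.prodMk h.2⟩

theorem IsMaxLKSSol.not_tendsto_nhdsGT {a σ γ lam smr : ℝ} {sp : EReal} {w v : ℝ → ℝ}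
    {p : ℝ × ℝ} (hsol : IsMaxLKSSol a σ γ lam smr sp w v) (hp : 0 < p.1) :
    ¬ Tendsto (fun s => (w s, v s)) (𝓝[>] smr) (𝓝 p) := by
  intro hlim
  obtain ⟨⟨hlt, hode⟩, hmax⟩ := hsol
  have hode' : ∀ s : ℝ, smr < s → (s : EReal) < sp →
      HasDerivAt (fun t => (w t, v t)) (lksField a σ γ lam (w s, v s)) s := fun s h1 h2 =>
    hasDerivAt_prod_lksField_iff.2 (hode s (EReal.coe_lt_coe_iff.2 h1) h2).2
  obtain ⟨c, hc, hcsp⟩ := EReal.exists_between_coe_real hlt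
  have hc' : smr < c := EReal.coe_lt_coe_iff.1 hc
  obtain ⟨W, hW0, hWeq, ε, hε, hW⟩ := exists_hasDerivAt_extend_left
    (contDiff_lksField a σ γ lam).contDiffAt hc'
    (fun s hs => hode' s hs.1 ((EReal.coe_lt_coe_iff.2 hs.2).trans hcsp)) hlim
  obtain ⟨δ, hδ, hpos⟩ : ∃ δ > 0, ∀ s, dist s smr < δ → 0 < (W s).1 :=
    Metric.eventually_nhds_iff.1 <| (continuous_fst.continuousAt.comp
      (hW smr ⟨by linarith, hc'⟩).continuousAt).eventually (lt_mem_nhds (by simpa [hW0] using hp))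
  have hm : smr - min ε δ < smr := by have := lt_min hε hδ; linarith
  refine hmax (smr - min ε δ : ℝ) sp (fun s => (W s).1) (fun s => (W s).2)
    (EReal.coe_le_coe_iff.2 hm.le) le_rfl (Or.inl (EReal.coe_lt_coe_iff.2 hm))
    (fun s h1 _ => by simp [hWeq s (EReal.coe_lt_coe_iff.1 h1)])
    ⟨(EReal.coe_lt_coe_iff.2 hm).trans hlt, fun s hs₁ hs₂ => ?_⟩
  have hs₁ : smr - min ε δ < s := EReal.coe_lt_coe_iff.1 hs₁
  suffices 0 < (W s).1 ∧ HasDerivAt W (lksField a σ γ lam (W s)) s from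
    ⟨this.1, hasDerivAt_prod_lksField_iff.1 this.2⟩
  by_cases hs : smr < s
  · rw [hWeq s hs]
    refine ⟨(hode s (EReal.coe_lt_coe_iff.2 hs) hs₂).1, (hode' s hs hs₂).congr_of_eventuallyEq ?_⟩
    filter_upwards [Ioi_mem_nhds hs] with t ht using hWeq t ht
  · rw [not_lt] at hs
    refine ⟨hpos s ?_, hW s ⟨by linarith [min_le_left ε δ], by linarith⟩⟩
    rw [Real.dist_eq, abs_of_nonpos (by linarith)]
    linarith [min_le_right ε δ]

noncomputable def invExcess (γ lam : ℝ) (v : ℝ → ℝ) (s : ℝ) : ℝ := (v s - √(lam / γ))⁻¹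

theorem sqrt_add_inv_invExcess (γ lam : ℝ) (v : ℝ → ℝ) (t : ℝ) :
    √(lam / γ) + (invExcess γ lam v t)⁻¹ = v t := by
  simp [invExcess]

section Solution

variable {a σ γ lam : ℝ} {sm sp : EReal} {w v : ℝ → ℝ}

theorem IsLKSSol.hasDerivAt_log_w (hsol : IsLKSSol a σ γ lam sm sp w v) {t : ℝ}
    (h₁ : sm < t) (h₂ : (t : EReal) < sp) :
    HasDerivAt (fun s => Real.log (w s)) ((a - 1) * v t - σ) t := by
  obtain ⟨hw, hw', -⟩ := hsol.2 t h₁ h₂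
  exact (hw'.log hw.ne').congr_deriv (by field_simp)

theorem IsLKSSol.sqrt_lt_of_le (hγ : 0 < γ) (hsol : IsLKSSol a σ γ lam sm sp w v) {t s : ℝ}
    (ht : sm < t) (hts : t ≤ s) (hs : (s : EReal) < sp) (hvs : √(lam / γ) < v s) :
    √(lam / γ) < v t := by
  have hmem : ∀ x ∈ Icc t s, sm < x ∧ (x : EReal) < sp := fun x hx =>
    ⟨ht.trans_le (EReal.coe_le_coe_iff.2 hx.1), (EReal.coe_le_coe_iff.2 hx.2).trans_lt hs⟩
  have hv : ∀ x ∈ Icc t s, HasDerivAt v (lam / γ - v x ^ 2 - w x / γ) x := fun x hx =>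
    (hsol.2 x (hmem x hx).1 (hmem x hx).2).2.2
  by_contra! hvt
  -- at the level `v = v⋆` the field points strictly downwards, so `v` cannot climb back above it
  have := image_le_of_deriv_right_lt_deriv_boundary' (B := fun _ => √(lam / γ)) (B' := 0)
    (fun x hx => (hv x hx).continuousAt.continuousWithinAt)
    (fun x hx => (hv x (Ico_subset_Icc_self hx)).hasDerivWithinAt) hvt continuousOn_const
    (fun x _ => hasDerivWithinAt_const _ _ _) (fun x hx hvx => ?_) ⟨hts, le_rfl⟩
  · exact this.not_gt hvs
  have hw := (hsol.2 x (hmem x (Ico_subset_Icc_self hx)).1 (hmem x (Ico_subset_Icc_self hx)).2).1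
  have hsq : lam / γ ≤ v x ^ 2 := by rw [hvx, Real.sq_sqrt']; exact le_max_left _ _
  have : 0 < w x / γ := div_pos hw hγ
  simp only [Pi.zero_apply]
  linarith

theorem IsLKSSol.hasDerivAt_invExcess (hlγ : 0 ≤ lam / γ) (hsol : IsLKSSol a σ γ lam sm sp w v)
    {t : ℝ} (h₁ : sm < t) (h₂ : (t : EReal) < sp) (hvt : v t ≠ √(lam / γ)) :
    HasDerivAt (invExcess γ lam v) (1 + 2 * √(lam / γ) * invExcess γ lam v t +
      w t / γ * invExcess γ lam v t ^ 2) t := by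
  have hne : v t - √(lam / γ) ≠ 0 := sub_ne_zero.2 hvt
  refine (((hsol.2 t h₁ h₂).2.2.sub_const _).inv hne).congr_deriv ?_
  rw [invExcess]
  set c := √(lam / γ)
  rw [show lam / γ = c ^ 2 from (Real.sq_sqrt hlγ).symm]
  field_simp
  ring

theorem IsLKSSol.invExcess_pos_hasDerivAt (hγ : 0 < γ) (hlγ : 0 ≤ lam / γ)
    (hsol : IsLKSSol a σ γ lam sm sp w v) {s₀ t : ℝ} (hs₀ : (s₀ : EReal) < sp)
    (hv₀ : √(lam / γ) < v s₀) (ht : sm < t) (hts : t ≤ s₀) :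
    0 < w t ∧ 0 < invExcess γ lam v t ∧ HasDerivAt (invExcess γ lam v) (1 + 2 * √(lam / γ) *
      invExcess γ lam v t + w t / γ * invExcess γ lam v t ^ 2) t := by
  have hts' := (EReal.coe_le_coe_iff.2 hts).trans_lt hs₀
  have hvt := hsol.sqrt_lt_of_le hγ ht hts hs₀ hv₀
  exact ⟨(hsol.2 t ht hts').1, inv_pos.2 (sub_pos.2 hvt),
    hsol.hasDerivAt_invExcess hlγ ht hts' hvt.ne'⟩

theorem IsLKSSol.coe_sub_invExcess_le (hγ : 0 < γ) (hlγ : 0 ≤ lam / γ)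
    (hsol : IsLKSSol a σ γ lam sm sp w v) {s₀ : ℝ} (hs₀ : (s₀ : EReal) < sp)
    (hv₀ : √(lam / γ) < v s₀) : ((s₀ - invExcess γ lam v s₀ : ℝ) : EReal) ≤ sm := by
  set y := invExcess γ lam v
  have hys₀ : 0 < y s₀ := inv_pos.2 (sub_pos.2 hv₀)
  by_contra! hsm
  have hy := fun t (ht : t ∈ Icc (s₀ - y s₀) s₀) =>
    hsol.invExcess_pos_hasDerivAt hγ hlγ hs₀ hv₀ (hsm.trans_le (EReal.coe_le_coe_iff.2 ht.1)) ht.2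
  have hslope := mul_sub_le_image_sub_of_le_hasDerivAt (C := 1) (by linarith)
    (fun t ht => (hy t ht).2.2) fun t ht => by
      obtain ⟨hwt, hyt, -⟩ := hy t (Ioo_subset_Icc_self ht)
      have : 0 ≤ 2 * √(lam / γ) * y t + w t / γ * y t ^ 2 := by positivity
      linarith
  have := (hy (s₀ - y s₀) ⟨le_rfl, by linarith⟩).2.1
  linarith

theorem IsLKSSol.exists_tendsto_w_of_abs_v_le {smr s₀ M : ℝ}
    (hsol : IsLKSSol a σ γ lam smr sp w v) (hs₀m : smr < s₀) (hs₀ : (s₀ : EReal) < sp)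
    (hv : ∀ t ∈ Ioo smr s₀, |v t| ≤ M) : ∃ W > 0, Tendsto w (𝓝[>] smr) (𝓝 W) := by
  have hdom : ∀ t ∈ Ioo smr s₀, (smr : EReal) < t ∧ (t : EReal) < sp := fun t ht =>
    ⟨EReal.coe_lt_coe_iff.2 ht.1, (EReal.coe_lt_coe_iff.2 ht.2).trans hs₀⟩
  obtain ⟨ℓ, hℓ⟩ := exists_tendsto_nhdsGT_of_abs_hasDerivAt_le (K := |a - 1| * M + |σ|) hs₀m
    (fun t ht => hsol.hasDerivAt_log_w (hdom t ht).1 (hdom t ht).2) fun t ht =>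
      calc |(a - 1) * v t - σ| ≤ |a - 1| * |v t| + |σ| := by
            rw [← abs_mul]; exact abs_sub _ _
        _ ≤ |a - 1| * M + |σ| := by gcongr; exact hv t ht
  refine ⟨Real.exp ℓ, Real.exp_pos ℓ, ((Real.continuous_exp.tendsto ℓ).comp hℓ).congr' ?_⟩
  filter_upwards [Ioo_mem_nhdsGT hs₀m] with t ht
  exact Real.exp_log (hsol.2 t (hdom t ht).1 (hdom t ht).2).1

theorem IsMaxLKSSol.tendsto_invExcess_nhdsGT (hγ : 0 < γ) (hlγ : 0 ≤ lam / γ) {smr s₀ : ℝ}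
    (hsol : IsMaxLKSSol a σ γ lam smr sp w v) (hs₀m : smr < s₀) (hs₀ : (s₀ : EReal) < sp)
    (hv₀ : √(lam / γ) < v s₀) : Tendsto (invExcess γ lam v) (𝓝[>] smr) (𝓝[>] 0) := by
  set y := invExcess γ lam v
  have hy := fun t (ht : t ∈ Ioo smr s₀) =>
    hsol.1.invExcess_pos_hasDerivAt hγ hlγ hs₀ hv₀ (EReal.coe_lt_coe_iff.2 ht.1) ht.2.le
  have hmono : MonotoneOn y (Ioo smr s₀) := fun s hs t ht hst => by
    have := mul_sub_le_image_sub_of_le_hasDerivAt (C := 0) hst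
      (fun r hr => (hy r ⟨hs.1.trans_le hr.1, hr.2.trans_lt ht.2⟩).2.2) fun r hr => by
        obtain ⟨hwr, hyr, -⟩ := hy r ⟨hs.1.trans hr.1, hr.2.trans ht.2⟩
        positivity
    linarith
  have hbdd : BddBelow (y '' Ioo smr s₀) := ⟨0, by
    rintro _ ⟨t, ht, rfl⟩
    exact (hy t ht).2.1.le⟩
  set L := sInf (y '' Ioo smr s₀)
  have hlim : Tendsto y (𝓝[>] smr) (𝓝 L) :=
    hmono.tendsto_nhdsWithin_Ioo_right (nonempty_Ioo.2 hs₀m) hbdd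
  have hLy : ∀ t ∈ Ioo smr s₀, L ≤ y t := fun t ht => csInf_le hbdd (mem_image_of_mem y ht)
  have hL : 0 ≤ L := le_csInf ((nonempty_Ioo.2 hs₀m).image y) (by
    rintro _ ⟨t, ht, rfl⟩
    exact (hy t ht).2.1.le)
  rcases hL.eq_or_lt with hL | hL
  · refine tendsto_nhdsWithin_iff.2 ⟨hL ▸ hlim, ?_⟩
    filter_upwards [Ioo_mem_nhdsGT hs₀m] with t ht using (hy t ht).2.1
  obtain ⟨W, hW, hwlim⟩ := hsol.1.exists_tendsto_w_of_abs_v_le (M := √(lam / γ) + L⁻¹)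
    hs₀m hs₀ fun t ht => by
      rw [← sqrt_add_inv_invExcess γ lam v t, abs_of_pos (by have := (hy t ht).2.1; positivity)]
      gcongr
      exact hLy t ht
  have hvlim : Tendsto v (𝓝[>] smr) (𝓝 (√(lam / γ) + L⁻¹)) := by
    have := (hlim.inv₀ hL.ne').const_add (√(lam / γ))
    rwa [funext (sqrt_add_inv_invExcess γ lam v)] at this
  exact (hsol.not_tendsto_nhdsGT hW (hwlim.prodMk_nhds hvlim)).elim

theorem IsLKSSol.hasDerivAt_log_invExcess (hγ : 0 < γ) (hlγ : 0 ≤ lam / γ)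
    (hsol : IsLKSSol a σ γ lam sm sp w v) {s₀ t : ℝ} (hs₀ : (s₀ : EReal) < sp)
    (hv₀ : √(lam / γ) < v s₀) (ht : sm < t) (hts : t ≤ s₀) :
    HasDerivAt (fun s => Real.log (invExcess γ lam v s))
      ((invExcess γ lam v t)⁻¹ + 2 * √(lam / γ) + w t * invExcess γ lam v t / γ) t := by
  obtain ⟨-, hy, hy'⟩ := hsol.invExcess_pos_hasDerivAt hγ hlγ hs₀ hv₀ ht hts
  exact (hy'.log hy.ne').congr_deriv (by field_simp)

theorem IsLKSSol.exists_w_mul_invExcess_le (ha : 0 ≤ a) (hγ : 0 < γ) (hlγ : 0 ≤ lam / γ)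
    {smr s₀ : ℝ} (hsol : IsLKSSol a σ γ lam smr sp w v) (hs₀ : (s₀ : EReal) < sp)
    (hv₀ : √(lam / γ) < v s₀) : ∃ M, ∀ t ∈ Ioc smr s₀, w t * invExcess γ lam v t ≤ M := by
  set y := invExcess γ lam v
  have hdom : ∀ t ∈ Ioc smr s₀, (smr : EReal) < t := fun t ht => EReal.coe_lt_coe_iff.2 ht.1
  have hpos := fun t ht => hsol.invExcess_pos_hasDerivAt hγ hlγ hs₀ hv₀ (hdom t ht) ht.2
  set c := (a + 1) * √(lam / γ) - σ
  have hlog : ∀ t ∈ Ioc smr s₀, HasDerivAt (fun s => Real.log (w s) + Real.log (y s))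
      (c + (a * (y t)⁻¹ + w t * y t / γ)) t := fun t ht =>
    ((hsol.hasDerivAt_log_w (hdom t ht) ((EReal.coe_le_coe_iff.2 ht.2).trans_lt hs₀)).add
      (hsol.hasDerivAt_log_invExcess hγ hlγ hs₀ hv₀ (hdom t ht) ht.2)).congr_deriv
      (by rw [← sqrt_add_inv_invExcess γ lam v t]; ring)
  have hc : ∀ t ∈ Ioc smr s₀, c ≤ c + (a * (y t)⁻¹ + w t * y t / γ) := fun t ht => by
    obtain ⟨hwt, hyt, -⟩ := hpos t ht
    exact le_add_of_nonneg_right (by positivity)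
  refine ⟨Real.exp (Real.log (w s₀) + Real.log (y s₀) + |c| * (s₀ - smr)), fun t ht => ?_⟩
  obtain ⟨hwt, hyt, -⟩ := hpos t ht
  have hslope := mul_sub_le_image_sub_of_le_hasDerivAt ht.2
    (fun r hr => hlog r ⟨ht.1.trans_le hr.1, hr.2⟩) fun r hr => hc r ⟨ht.1.trans hr.1, hr.2.le⟩
  have : -(c * (s₀ - t)) ≤ |c| * (s₀ - smr) := by
    rw [← neg_mul]
    exact mul_le_mul (neg_le_abs c) (by linarith [ht.1]) (by linarith [ht.2]) (abs_nonneg c)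
  rw [← Real.exp_log (mul_pos hwt hyt), Real.log_mul hwt.ne' hyt.ne']
  exact Real.exp_le_exp.2 (by linarith)

theorem IsLKSSol.exists_tendsto_log_w_add_log_invExcess (ha : 0 ≤ a) (hγ : 0 < γ)
    (hlγ : 0 ≤ lam / γ) {smr s₀ : ℝ} (hsol : IsLKSSol a σ γ lam smr sp w v) (hs₀m : smr < s₀)
    (hs₀ : (s₀ : EReal) < sp) (hv₀ : √(lam / γ) < v s₀) :
    ∃ ℓ, Tendsto (fun t => Real.log (w t) + (1 - a) * Real.log (invExcess γ lam v t))
      (𝓝[>] smr) (𝓝 ℓ) := by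
  set y := invExcess γ lam v
  obtain ⟨M, hM⟩ := hsol.exists_w_mul_invExcess_le ha hγ hlγ hs₀ hv₀
  have hdom : ∀ t ∈ Ioo smr s₀, (smr : EReal) < t := fun t ht => EReal.coe_lt_coe_iff.2 ht.1
  set c := (1 - a) * √(lam / γ) - σ
  -- the `1 / y` singularities of `(log w)'` and `(1 - a) (log y)'` cancel
  have hderiv : ∀ t ∈ Ioo smr s₀, HasDerivAt
      (fun s => Real.log (w s) + (1 - a) * Real.log (y s)) (c + (1 - a) * (w t * y t / γ)) t := by
    intro t ht
    refine ((hsol.hasDerivAt_log_w (hdom t ht) ((EReal.coe_lt_coe_iff.2 ht.2).trans hs₀)).add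
      ((hsol.hasDerivAt_log_invExcess hγ hlγ hs₀ hv₀ (hdom t ht) ht.2.le).const_mul
        (1 - a))).congr_deriv ?_
    rw [← sqrt_add_inv_invExcess γ lam v t]
    ring
  refine exists_tendsto_nhdsGT_of_abs_hasDerivAt_le hs₀m hderiv (K := |c| + |1 - a| * (M / γ))
    fun t ht => ?_
  obtain ⟨hwt, hyt, -⟩ : 0 < w t ∧ 0 < y t ∧ _ :=
    hsol.invExcess_pos_hasDerivAt hγ hlγ hs₀ hv₀ (hdom t ht) ht.2.le
  calc |c + (1 - a) * (w t * y t / γ)| ≤ |c| + |1 - a| * |w t * y t / γ| := by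
        rw [← abs_mul]; exact abs_add_le _ _
    _ ≤ |c| + |1 - a| * (M / γ) := by
        rw [abs_of_pos (show 0 < w t * y t / γ by positivity)]
        gcongr
        exact hM t (Ioo_subset_Ioc_self ht)

end Solution

theorem stmt4_general (a σ γ lam : ℝ) (ha : 0 < a) (hγ : 0 < γ) (hlam : 0 < lam)
    (v0 s0 : ℝ) (hv0 : Real.sqrt (lam / γ) < v0)
    (sm sp : EReal) (w v : ℝ → ℝ)
    (hsol : IsMaxLKSSol a σ γ lam sm sp w v)
    (hs0m : sm < (s0 : EReal)) (hs0p : (s0 : EReal) < sp)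
    (hv : v s0 = v0) :
    ∃ smr : ℝ, sm = (smr : EReal) ∧
      Tendsto v (𝓝[>] smr) atTop ∧
      (a < 1 → Tendsto w (𝓝[>] smr) atTop) ∧
      (a = 1 → ∃ L : ℝ, 0 < L ∧ Tendsto w (𝓝[>] smr) (𝓝 L)) ∧
      (1 < a → Tendsto w (𝓝[>] smr) (𝓝 0)) := by
  subst hv
  have hlγ : 0 ≤ lam / γ := by positivity
  have hsm := hsol.1.coe_sub_invExcess_le hγ hlγ hs0p hv0
  obtain ⟨smr, rfl⟩ : ∃ smr : ℝ, sm = smr := ⟨sm.toReal, (EReal.coe_toReal (ne_top_of_lt hs0m)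
    (ne_bot_of_le_ne_bot (EReal.coe_ne_bot _) hsm)).symm⟩
  have hs0m' : smr < s0 := EReal.coe_lt_coe_iff.1 hs0m
  set y := invExcess γ lam v
  have hy := hsol.tendsto_invExcess_nhdsGT hγ hlγ hs0m' hs0p hv0
  have hlogy : Tendsto (fun t => Real.log (y t)) (𝓝[>] smr) atBot :=
    Real.tendsto_log_nhdsGT_zero.comp hy
  obtain ⟨ℓ, hζ⟩ := hsol.1.exists_tendsto_log_w_add_log_invExcess ha.le hγ hlγ hs0m' hs0p hv0
  have hw : (fun t => Real.exp ((Real.log (w t) + (1 - a) * Real.log (y t)) +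
      (a - 1) * Real.log (y t))) =ᶠ[𝓝[>] smr] w := by
    filter_upwards [Ioo_mem_nhdsGT hs0m'] with t ht
    rw [add_assoc, ← add_mul, sub_add_sub_cancel', sub_self, zero_mul, add_zero]
    exact Real.exp_log (hsol.1.2 t (EReal.coe_lt_coe_iff.2 ht.1)
      ((EReal.coe_lt_coe_iff.2 ht.2).trans hs0p)).1
  refine ⟨smr, rfl, ?_, fun h => ?_, fun h => ?_, fun h => ?_⟩
  · rw [← funext (sqrt_add_inv_invExcess γ lam v)]
    exact tendsto_atTop_add_const_left _ _ (tendsto_inv_nhdsGT_zero.comp hy)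
  · exact (Real.tendsto_exp_atTop.comp
      (hζ.add_atTop (hlogy.const_mul_atBot_of_neg (by linarith)))).congr' hw
  · subst h
    simp only [sub_self, zero_mul, add_zero] at hζ hw
    exact ⟨Real.exp ℓ, Real.exp_pos ℓ, ((Real.continuous_exp.tendsto ℓ).comp hζ).congr' hw⟩
  · exact (Real.tendsto_exp_atBot.comp
      (hζ.add_atBot (hlogy.const_mul_atBot (by linarith)))).congr' hw

/-- For `a > 0`, `v₀ > v⋆`, `w₀ > 0`, any maximal solution of
(LKS) through `(w₀, v₀)` has a finite left endpoint `s₋`, `v → +∞` at `s₋⁺`, and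
`w → +∞` (if `a < 1`), `w →` a finite positive limit (if `a = 1`), `w → 0`
(if `a > 1`) as `s → s₋⁺`. -/
theorem stmt4 (a σ γ lam : ℝ) (ha : 0 < a) (hσ : 0 < σ) (hγ : 0 < γ) (hlam : 0 < lam)
    (v0 w0 s0 : ℝ) (hv0 : Real.sqrt (lam / γ) < v0) (hw0 : 0 < w0)
    (sm sp : EReal) (w v : ℝ → ℝ)
    (hsol : IsMaxLKSSol a σ γ lam sm sp w v)
    (hs0m : sm < (s0 : EReal)) (hs0p : (s0 : EReal) < sp)
    (hw : w s0 = w0) (hv : v s0 = v0) :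
    ∃ smr : ℝ, sm = (smr : EReal) ∧
      Tendsto v (𝓝[>] smr) atTop ∧
      (a < 1 → Tendsto w (𝓝[>] smr) atTop) ∧
      (a = 1 → ∃ L : ℝ, 0 < L ∧ Tendsto w (𝓝[>] smr) (𝓝 L)) ∧
      (1 < a → Tendsto w (𝓝[>] smr) (𝓝 0)) :=
  stmt4_general a σ γ lam ha hγ hlam v0 s0 hv0 sm sp w v hsol hs0m hs0p hv
end

section
/- Let a > 0 and let (w, v) be a maximal solution of (LKS) on (s_−, s_+) with w > 0, and suppose s_+ < +∞. Fix s₀ ∈ (s_−, s_+) and S₀ > 0, and define S(s) = S₀·exp(∫_{s₀}^{s} v(τ) dτ) and u(s) = w(s)·S(s) for s ∈ (s_−, s_+). Then S(s) → 0 and u(s) → 0 as s → s_+⁻. -/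
open Set Filter Topology

/-!
If `v` were bounded below near `s₊`, then `v' ≤ λ/γ` and `w = w(c) exp ∫ ((a-1)v - σ)` would
keep `(w, v)` in a compact set, and a Picard–Lindelöf step of uniform length would continue the
solution past `s₊`, contradicting maximality. Once `v < -√(λ/γ)`, `v` is decreasing, so `v → -∞`.
If `I = ∫ v` stayed bounded, `w` would be bounded too, and `P = v e^I = (e^I)'` would satisfy
`P' = (λ - w) e^I / γ ≥ -C`, so `P` would stay bounded below on the finite interval, whereas
`P ≤ v e^{-B} → -∞`. Hence `I → -∞`, so `S → 0`, and `u = w(s₀) S₀ exp (a I - σ (s - s₀)) → 0`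
because `a > 0`.
-/

theorem Convex.image_sub_le_mul_sub_of_hasDerivAt_le {D : Set ℝ} (hD : Convex ℝ D)
    {f f' : ℝ → ℝ} {C : ℝ} (hf : ∀ x ∈ D, HasDerivAt f (f' x) x) (hf'C : ∀ x ∈ D, f' x ≤ C)
    {x y : ℝ} (hx : x ∈ D) (hy : y ∈ D) (hxy : x ≤ y) : f y - f x ≤ C * (y - x) :=
  hD.image_sub_le_mul_sub_of_deriv_le (fun z hz => (hf z hz).continuousAt.continuousWithinAt)
    (fun z hz => (hf z (interior_subset hz)).differentiableAt.differentiableWithinAt)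
    (fun z hz => (hf z (interior_subset hz)).deriv ▸ hf'C z (interior_subset hz)) x hx y hy hxy

theorem ContinuousOn.hasDerivAt_integral {E : Type*} [NormedAddCommGroup E] [NormedSpace ℝ E]
    [CompleteSpace E] {g : ℝ → E} {J : Set ℝ} (hg : ContinuousOn g J) (hJ : IsOpen J)
    (hJc : J.OrdConnected) {c x : ℝ} (hc : c ∈ J) (hx : x ∈ J) :
    HasDerivAt (fun t => ∫ τ in c..t, g τ) (g x) x :=
  intervalIntegral.integral_hasDerivAt_right (hg.mono (hJc.uIcc_subset hc hx)).intervalIntegrable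
    (hg.stronglyMeasurableAtFilter hJ x hx) (hg.continuousAt (hJ.mem_nhds hx))

theorem IsOpen.eq_mul_exp_integral_of_hasDerivAt {J : Set ℝ} (hJ : IsOpen J)
    (hJc : J.OrdConnected) {u g : ℝ → ℝ} (hu : ∀ x ∈ J, HasDerivAt u (u x * g x) x)
    (hg : ContinuousOn g J) {c t : ℝ} (hc : c ∈ J) (ht : t ∈ J) :
    u t = u c * Real.exp (∫ τ in c..t, g τ) := by
  have hderiv : ∀ x ∈ J,
      HasDerivAt (fun x => u x * Real.exp (-∫ τ in c..x, g τ)) 0 x := fun x hx =>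
    ((hu x hx).mul (hg.hasDerivAt_integral hJ hJc hc hx).neg.exp).congr_deriv (by ring)
  have hconst := hJ.is_const_of_deriv_eq_zero hJc.isPreconnected
    (fun x hx => (hderiv x hx).differentiableAt.differentiableWithinAt)
    (fun x hx => (hderiv x hx).deriv) ht hc
  simp only [intervalIntegral.integral_same, neg_zero, Real.exp_zero, mul_one] at hconst
  rw [← hconst, mul_assoc, ← Real.exp_add, neg_add_cancel, Real.exp_zero, mul_one]

section Extension

variable {E : Type*} [NormedAddCommGroup E] [NormedSpace ℝ E] [ProperSpace E] {F : E → E}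

theorem LocallyLipschitz.exists_forall_mem_exists_eq_forall_mem_Ioo_hasDerivAt
    (hF : LocallyLipschitz F) {K : Set E} (hK : IsCompact K) :
    ∃ ε > (0 : ℝ), ∀ x ∈ K, ∀ t₀ : ℝ, ∃ α : ℝ → E, α t₀ = x ∧
      ∀ t ∈ Ioo (t₀ - ε) (t₀ + ε), HasDerivAt α (F (α t)) t := by
  obtain ⟨r, hKr⟩ := hK.isBounded.subset_closedBall 0
  have hB : IsCompact (Metric.closedBall (0 : E) (r + 1)) := isCompact_closedBall _ _
  obtain ⟨C, hC⟩ := hB.exists_bound_of_continuousOn hF.continuous.continuousOn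
  obtain ⟨L, hL⟩ := hF.locallyLipschitzOn.exists_lipschitzOnWith_of_compact hB
  set ε := 1 / (C.toNNReal + 1 : ℝ)
  refine ⟨ε, by positivity, fun x hx t₀ => ?_⟩
  have hball : Metric.closedBall x 1 ⊆ Metric.closedBall 0 (r + 1) := by
    refine Metric.closedBall_subset_closedBall' ?_
    linarith [Metric.mem_closedBall.1 (hKr hx)]
  have hpl : IsPicardLindelof (fun _ => F) (tmin := t₀ - ε) (tmax := t₀ + ε)
      ⟨t₀, by constructor <;> linarith [show 0 < ε by positivity]⟩ x 1 0 C.toNNReal L := by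
    refine IsPicardLindelof.of_time_independent (fun y hy => ?_) (hL.mono hball) ?_
    · exact (hC y (hball hy)).trans (le_max_left _ _)
    · have hε : 0 < ε := by positivity
      simp only [add_sub_cancel_left, sub_sub_cancel, max_self, NNReal.coe_one,
        NNReal.coe_zero, sub_zero]
      rw [mul_one_div, div_le_one (by positivity)]
      linarith
  obtain ⟨α, hα₀, hα⟩ := hpl.exists_eq_forall_mem_Icc_hasDerivWithinAt₀
  exact ⟨α, hα₀, fun t ht =>
    (hα t (Ioo_subset_Icc_self ht)).hasDerivAt (Icc_mem_nhds ht.1 ht.2)⟩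

theorem LocallyLipschitz.exists_extension_of_isBounded_image (hF : LocallyLipschitz F)
    {f : ℝ → E} {a b : ℝ} (hab : a < b) (hf : ∀ t ∈ Ioo a b, HasDerivAt f (F (f t)) t)
    (hbdd : Bornology.IsBounded (f '' Ioo a b)) :
    ∃ c > b, ∃ g : ℝ → E, EqOn g f (Iio b) ∧ ∀ t ∈ Ioo a c, HasDerivAt g (F (g t)) t := by
  obtain ⟨ε, hε, hsol⟩ :=
    hF.exists_forall_mem_exists_eq_forall_mem_Ioo_hasDerivAt hbdd.isCompact_closure
  -- restart from `f t₀` with `t₀` within `ε / 2` of `b`; uniqueness glues the two solutions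
  obtain ⟨t₀, ht₀, ht₀b⟩ := exists_between (max_lt hab (sub_lt_self b (half_pos hε)))
  obtain ⟨hat₀, hbt₀⟩ := max_lt_iff.1 ht₀
  obtain ⟨α, hα₀, hα⟩ := hsol (f t₀) (subset_closure (mem_image_of_mem f ⟨hat₀, ht₀b⟩)) t₀
  set a' := max a (t₀ - ε / 2)
  have ha't₀ : a' < t₀ := max_lt hat₀ (by linarith)
  have hIcc : Icc a' b ⊆ Ioo (t₀ - ε) (t₀ + ε) := fun t ht =>
    ⟨by linarith [ht.1, le_max_right a (t₀ - ε / 2)], by linarith [ht.2]⟩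
  have hαc : ContinuousOn α (Icc a' b) := fun t ht =>
    (hα t (hIcc ht)).continuousAt.continuousWithinAt
  obtain ⟨R, hR⟩ := (hbdd.isCompact_closure.union
    (isCompact_Icc.image_of_continuousOn hαc)).isBounded.subset_closedBall 0
  obtain ⟨L, hL⟩ :=
    hF.locallyLipschitzOn.exists_lipschitzOnWith_of_compact (isCompact_closedBall (0 : E) R)
  have hαf : EqOn α f (Ioo a' b) := ODE_solution_unique_of_mem_Ioo (fun _ _ => hL)
    ⟨ha't₀, ht₀b⟩
    (fun t ht => ⟨hα t (hIcc (Ioo_subset_Icc_self ht)),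
      hR (Or.inr (mem_image_of_mem α (Ioo_subset_Icc_self ht)))⟩)
    (fun t ht => have ht' : t ∈ Ioo a b := ⟨(le_max_left _ _).trans_lt ht.1, ht.2⟩
      ⟨hf t ht', hR (Or.inl (subset_closure (mem_image_of_mem f ht')))⟩)
    hα₀
  set g : ℝ → E := fun t => if t < b then f t else α t
  have hgα : EqOn g α (Ioi a') := fun t ht => by
    by_cases htb : t < b
    · simp only [g, if_pos htb]; exact (hαf ⟨ht, htb⟩).symm
    · simp only [g, if_neg htb]
  refine ⟨t₀ + ε, by linarith, g, fun t ht => if_pos ht, fun t ht => ?_⟩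
  by_cases htb : t < b
  · have hgf : g =ᶠ[𝓝 t] f := eventually_of_mem (Iio_mem_nhds htb) fun s hs => if_pos hs
    rw [hgf.eq_of_nhds]
    exact (hf t ⟨ht.1, htb⟩).congr_of_eventuallyEq hgf
  · have hta' : a' < t := lt_of_lt_of_le (ha't₀.trans ht₀b) (not_lt.1 htb)
    have hg : g =ᶠ[𝓝 t] α := eventually_of_mem (Ioi_mem_nhds hta') hgα
    rw [hg.eq_of_nhds]
    exact (hα t ⟨by linarith [le_max_right a (t₀ - ε / 2)], ht.2⟩).congr_of_eventuallyEq hg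

end Extension

theorem locallyLipschitz_lksField (a σ γ lam : ℝ) : LocallyLipschitz (lksField a σ γ lam) :=
  ContDiff.locallyLipschitz (𝕂 := ℝ) (by unfold lksField; fun_prop)

theorem isOpen_coe_preimage_Ioo (sm sp : EReal) : IsOpen (((↑) : ℝ → EReal) ⁻¹' Ioo sm sp) :=
  isOpen_Ioo.preimage continuous_coe_real_ereal

theorem ordConnected_coe_preimage_Ioo (sm sp : EReal) :
    (((↑) : ℝ → EReal) ⁻¹' Ioo sm sp).OrdConnected :=
  ordConnected_Ioo.preimage_mono EReal.coe_strictMono.monotone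

theorem Ico_subset_coe_preimage_Ioo {sm : EReal} {c q : ℝ} (hc : sm < c) :
    Ico c q ⊆ ((↑) : ℝ → EReal) ⁻¹' Ioo sm q :=
  fun _ hs => ⟨hc.trans_le (EReal.coe_le_coe_iff.2 hs.1), EReal.coe_lt_coe_iff.2 hs.2⟩

namespace IsLKSSol

variable {a σ γ lam : ℝ} {sm sp : EReal} {w v : ℝ → ℝ}

theorem pos (h : IsLKSSol a σ γ lam sm sp w v) {s : ℝ} (hs : ↑s ∈ Ioo sm sp) : 0 < w s :=
  (h.2 s hs.1 hs.2).1

theorem hasDerivAt_w (h : IsLKSSol a σ γ lam sm sp w v) {s : ℝ} (hs : ↑s ∈ Ioo sm sp) :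
    HasDerivAt w (w s * ((a - 1) * v s - σ)) s :=
  (h.2 s hs.1 hs.2).2.1

theorem hasDerivAt_v (h : IsLKSSol a σ γ lam sm sp w v) {s : ℝ} (hs : ↑s ∈ Ioo sm sp) :
    HasDerivAt v (lam / γ - v s ^ 2 - w s / γ) s :=
  (h.2 s hs.1 hs.2).2.2

theorem hasDerivAt_prod (h : IsLKSSol a σ γ lam sm sp w v) {s : ℝ} (hs : ↑s ∈ Ioo sm sp) :
    HasDerivAt (fun t => (w t, v t)) (lksField a σ γ lam (w s, v s)) s :=
  (h.hasDerivAt_w hs).prodMk (h.hasDerivAt_v hs)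

theorem continuousOn_v (h : IsLKSSol a σ γ lam sm sp w v) :
    ContinuousOn v (((↑) : ℝ → EReal) ⁻¹' Ioo sm sp) :=
  fun _ hs => (h.hasDerivAt_v hs).continuousAt.continuousWithinAt

theorem hasDerivAt_integral_v (h : IsLKSSol a σ γ lam sm sp w v) {c s : ℝ}
    (hc : ↑c ∈ Ioo sm sp) (hs : ↑s ∈ Ioo sm sp) :
    HasDerivAt (fun t => ∫ τ in c..t, v τ) (v s) s :=
  h.continuousOn_v.hasDerivAt_integral (isOpen_coe_preimage_Ioo sm sp)
    (ordConnected_coe_preimage_Ioo sm sp) hc hs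

theorem intervalIntegrable_v (h : IsLKSSol a σ γ lam sm sp w v) {c s : ℝ}
    (hc : ↑c ∈ Ioo sm sp) (hs : ↑s ∈ Ioo sm sp) :
    IntervalIntegrable v MeasureTheory.volume c s :=
  (h.continuousOn_v.mono
    ((ordConnected_coe_preimage_Ioo sm sp).uIcc_subset hc hs)).intervalIntegrable

theorem w_eq (h : IsLKSSol a σ γ lam sm sp w v) {c s : ℝ} (hc : ↑c ∈ Ioo sm sp)
    (hs : ↑s ∈ Ioo sm sp) :
    w s = w c * Real.exp ((a - 1) * (∫ τ in c..s, v τ) - σ * (s - c)) := by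
  rw [(isOpen_coe_preimage_Ioo sm sp).eq_mul_exp_integral_of_hasDerivAt
    (ordConnected_coe_preimage_Ioo sm sp) (fun _ hx => h.hasDerivAt_w hx)
    ((continuousOn_const.mul h.continuousOn_v).sub continuousOn_const) hc hs,
    intervalIntegral.integral_sub ((h.intervalIntegrable_v hc hs).const_mul _)
      intervalIntegrable_const, intervalIntegral.integral_const_mul,
    intervalIntegral.integral_const, smul_eq_mul, mul_comm (s - c)]

end IsLKSSol

section Blowup

variable {a σ γ lam : ℝ} {sm : EReal} {q : ℝ} {w v : ℝ → ℝ}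

theorem IsLKSSol.of_eqOn_of_hasDerivAt_lksField (h : IsLKSSol a σ γ lam sm q w v) {s₁ c : ℝ}
    (hs₁ : sm < s₁) (hs₁q : s₁ < q) (hqc : q < c) {g : ℝ → ℝ × ℝ}
    (hgf : EqOn g (fun t => (w t, v t)) (Iio q))
    (hg : ∀ t ∈ Ioo s₁ c, HasDerivAt g (lksField a σ γ lam (g t)) t) :
    IsLKSSol a σ γ lam sm c (fun t => (g t).1) (fun t => (g t).2) := by
  refine ⟨hs₁.trans (EReal.coe_lt_coe_iff.2 (hs₁q.trans hqc)), fun t hsmt htc => ?_⟩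
  rcases lt_or_ge t q with htq | hqt
  · have hev : g =ᶠ[𝓝 t] fun t => (w t, v t) := eventually_of_mem (Iio_mem_nhds htq) hgf
    have ht : ↑t ∈ Ioo sm (q : EReal) := ⟨hsmt, EReal.coe_lt_coe_iff.2 htq⟩
    simp only [hgf htq]
    exact ⟨h.pos ht, (h.hasDerivAt_w ht).congr_of_eventuallyEq (hev.fun_comp Prod.fst),
      (h.hasDerivAt_v ht).congr_of_eventuallyEq (hev.fun_comp Prod.snd)⟩
  · have hJ : ∀ t ∈ Ioo s₁ c,
        HasDerivAt (fun t => (g t).1) ((g t).1 * ((a - 1) * (g t).2 - σ)) t ∧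
        HasDerivAt (fun t => (g t).2) (lam / γ - (g t).2 ^ 2 - (g t).1 / γ) t := fun t ht =>
      ⟨(ContinuousLinearMap.fst ℝ ℝ ℝ).hasFDerivAt.comp_hasDerivAt t (hg t ht),
        (ContinuousLinearMap.snd ℝ ℝ ℝ).hasFDerivAt.comp_hasDerivAt t (hg t ht)⟩
    have ht : t ∈ Ioo s₁ c := ⟨hs₁q.trans_le hqt, EReal.coe_lt_coe_iff.1 htc⟩
    obtain ⟨m, hs₁m, hmq⟩ := exists_between hs₁q
    have hm : ↑m ∈ Ioo sm (q : EReal) :=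
      ⟨hs₁.trans (EReal.coe_lt_coe_iff.2 hs₁m), EReal.coe_lt_coe_iff.2 hmq⟩
    have hpos : 0 < (g m).1 := by simpa only [hgf hmq] using h.pos hm
    refine ⟨?_, (hJ t ht).1, (hJ t ht).2⟩
    show 0 < (g t).1
    rw [isOpen_Ioo.eq_mul_exp_integral_of_hasDerivAt ordConnected_Ioo (fun x hx => (hJ x hx).1)
      (fun x hx =>
        ((hJ x hx).2.continuousAt.const_mul _ |>.sub continuousAt_const).continuousWithinAt)
      ⟨hs₁m, hmq.trans hqc⟩ ht]
    positivity

theorem IsLKSSol.bddAbove_image_v (h : IsLKSSol a σ γ lam sm q w v) (hγ : 0 < γ)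
    (hlam : 0 < lam) {c : ℝ} (hc : sm < c) (hcq : c < q) : BddAbove (v '' Ioo c q) := by
  have hsub := Ico_subset_coe_preimage_Ioo (q := q) hc
  have hv' : ∀ x ∈ Ico c q, lam / γ - v x ^ 2 - w x / γ ≤ lam / γ := fun x hx => by
    nlinarith [sq_nonneg (v x), div_pos (h.pos (hsub hx)) hγ]
  refine ⟨v c + lam / γ * (q - c), ?_⟩
  rintro _ ⟨s, hs, rfl⟩
  have := (convex_Ico c q).image_sub_le_mul_sub_of_hasDerivAt_le
    (fun x hx => h.hasDerivAt_v (hsub hx)) hv' (left_mem_Ico.2 hcq) (Ioo_subset_Ico_self hs) hs.1.le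
  nlinarith [mul_le_mul_of_nonneg_left hs.2.le (div_pos hlam hγ).le]

theorem IsLKSSol.bddAbove_image_w (h : IsLKSSol a σ γ lam sm q w v) {c : ℝ} (hc : sm < c)
    (hI : Bornology.IsBounded ((fun s => ∫ τ in c..s, v τ) '' Ioo c q)) :
    BddAbove (w '' Ioo c q) := by
  have hsub := Ico_subset_coe_preimage_Ioo (q := q) hc
  obtain ⟨B, hB⟩ := isBounded_iff_forall_norm_le.1 hI
  refine ⟨w c * Real.exp (|a - 1| * B + |σ| * (q - c)), ?_⟩
  rintro _ ⟨s, hs, rfl⟩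
  rw [h.w_eq (hsub (left_mem_Ico.2 (hs.1.trans hs.2))) (hsub (Ioo_subset_Ico_self hs))]
  refine mul_le_mul_of_nonneg_left (Real.exp_le_exp.2 ?_)
    (h.pos (hsub (left_mem_Ico.2 (hs.1.trans hs.2)))).le
  have hIs : (a - 1) * ∫ τ in c..s, v τ ≤ |a - 1| * B :=
    (le_abs_self _).trans (abs_mul (a - 1) _ ▸
      mul_le_mul_of_nonneg_left (hB _ ⟨s, hs, rfl⟩) (abs_nonneg _))
  nlinarith [neg_abs_le σ, abs_nonneg σ, hs.1, hs.2]

theorem IsMaxLKSSol.not_bddBelow_image_v (h : IsMaxLKSSol a σ γ lam sm q w v) (hγ : 0 < γ)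
    (hlam : 0 < lam) {s₁ : ℝ} (hs₁ : sm < s₁) (hs₁q : s₁ < q) : ¬ BddBelow (v '' Ioo s₁ q) := by
  intro hbelow
  have hsub := Ico_subset_coe_preimage_Ioo (q := q) hs₁
  have hv : Bornology.IsBounded (v '' Ioo s₁ q) :=
    isBounded_iff_bddBelow_bddAbove.2 ⟨hbelow, h.1.bddAbove_image_v hγ hlam hs₁ hs₁q⟩
  obtain ⟨M, hM⟩ := isBounded_iff_forall_norm_le.1 hv
  have hI : Bornology.IsBounded ((fun s => ∫ τ in s₁..s, v τ) '' Ioo s₁ q) := by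
    refine isBounded_iff_forall_norm_le.2 ⟨M * (q - s₁), ?_⟩
    rintro _ ⟨s, hs, rfl⟩
    have hM0 : 0 ≤ M := (norm_nonneg _).trans (hM _ (mem_image_of_mem v hs))
    calc ‖∫ τ in s₁..s, v τ‖ ≤ M * |s - s₁| :=
          intervalIntegral.norm_integral_le_of_norm_le_const fun x hx =>
            have hx' := uIoc_of_le hs.1.le ▸ hx
            hM _ (mem_image_of_mem v ⟨hx'.1, hx'.2.trans_lt hs.2⟩)
      _ ≤ M * (q - s₁) := by
          rw [abs_of_pos (sub_pos.2 hs.1)]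
          exact mul_le_mul_of_nonneg_left (by linarith [hs.2]) hM0
  have hw : Bornology.IsBounded (w '' Ioo s₁ q) := isBounded_iff_bddBelow_bddAbove.2
    ⟨⟨0, by rintro _ ⟨s, hs, rfl⟩; exact (h.1.pos (hsub (Ioo_subset_Ico_self hs))).le⟩,
      h.1.bddAbove_image_w hs₁ hI⟩
  obtain ⟨c, hqc, g, hgf, hg⟩ :=
    (locallyLipschitz_lksField a σ γ lam).exists_extension_of_isBounded_image hs₁q
      (fun t ht => h.1.hasDerivAt_prod (hsub (Ioo_subset_Ico_self ht)))
      ((hw.prod hv).subset image_prodMk_subset_prod)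
  exact h.2 sm c _ _ le_rfl (EReal.coe_le_coe_iff.2 hqc.le) (Or.inr (EReal.coe_lt_coe_iff.2 hqc))
    (fun s _ hs => Prod.ext_iff.1 (hgf (EReal.coe_lt_coe_iff.1 hs)))
    (h.1.of_eqOn_of_hasDerivAt_lksField hs₁ hs₁q hqc hgf hg)

theorem IsLKSSol.le_of_lt_neg_sqrt (h : IsLKSSol a σ γ lam sm q w v) (hγ : 0 < γ) {t s : ℝ}
    (ht : sm < t) (hts : t ≤ s) (hsq : s < q) (hvt : v t < -√(lam / γ)) : v s ≤ v t := by
  have hsub : Icc t s ⊆ ((↑) : ℝ → EReal) ⁻¹' Ioo sm q := fun x hx =>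
    Ico_subset_coe_preimage_Ioo ht ⟨hx.1, hx.2.trans_lt hsq⟩
  refine image_le_of_deriv_right_lt_deriv_boundary' (B := fun _ => v t) (B' := fun _ => 0)
    (h.continuousOn_v.mono hsub)
    (fun x hx => (h.hasDerivAt_v (hsub (Ico_subset_Icc_self hx))).hasDerivWithinAt) le_rfl
    continuousOn_const (fun _ _ => hasDerivWithinAt_const _ _ _) (fun x hx hvx => ?_)
    ⟨hts, le_rfl⟩
  -- at a point where `v` returns to `v t < -√(λ/γ)`, it is strictly decreasing
  have hsq' : lam / γ < v x ^ 2 := by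
    rw [← neg_sq]
    exact (Real.sqrt_lt' (by linarith [Real.sqrt_nonneg (lam / γ)])).1 (by linarith)
  linarith [div_pos (h.pos (hsub (Ico_subset_Icc_self hx))) hγ]

theorem IsMaxLKSSol.tendsto_v_atBot (h : IsMaxLKSSol a σ γ lam sm q w v) (hγ : 0 < γ)
    (hlam : 0 < lam) {s₁ : ℝ} (hs₁ : sm < s₁) (hs₁q : s₁ < q) : Tendsto v (𝓝[<] q) atBot := by
  refine tendsto_atBot.2 fun M => ?_
  obtain ⟨_, ⟨t, ht, rfl⟩, hvt⟩ :=
    not_bddBelow_iff.1 (h.not_bddBelow_image_v hγ hlam hs₁ hs₁q) (min M (-√(lam / γ)))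
  filter_upwards [Ioo_mem_nhdsLT ht.2] with s hs
  exact (h.1.le_of_lt_neg_sqrt hγ (hs₁.trans (EReal.coe_lt_coe_iff.2 ht.1)) hs.1.le hs.2
    (hvt.trans_le (min_le_right _ _))).trans (hvt.le.trans (min_le_left _ _))

theorem IsLKSSol.not_isBounded_image_integral (h : IsLKSSol a σ γ lam sm q w v) (hγ : 0 < γ)
    (hlam : 0 < lam) {c : ℝ} (hc : sm < c) (hcq : c < q) (hv : Tendsto v (𝓝[<] q) atBot) :
    ¬ Bornology.IsBounded ((fun s => ∫ τ in c..s, v τ) '' Ioo c q) := by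
  intro hI
  have hsub := Ico_subset_coe_preimage_Ioo (q := q) hc
  have hc' := hsub (left_mem_Ico.2 hcq)
  obtain ⟨B, hB⟩ := isBounded_iff_forall_norm_le.1 hI
  obtain ⟨W, hW⟩ := h.bddAbove_image_w hc hI
  set I := fun s => ∫ τ in c..s, v τ
  have hIB : ∀ s ∈ Ioo c q, |I s| ≤ B := fun s hs => hB _ ⟨s, hs, rfl⟩
  -- `P = v e^I` is the derivative of `e^I`; the `v²` terms cancel in `P'`
  set P := fun s => v s * Real.exp (I s)
  have hP : ∀ s ∈ Ioo c q, HasDerivAt P ((lam / γ - w s / γ) * Real.exp (I s)) s := fun s hs =>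
    ((h.hasDerivAt_v (hsub (Ioo_subset_Ico_self hs))).mul
      (h.hasDerivAt_integral_v hc' (hsub (Ioo_subset_Ico_self hs))).exp).congr_deriv (by ring)
  have hP'le : ∀ x ∈ Ioo c q, -((lam / γ - w x / γ) * Real.exp (I x)) ≤ W / γ * Real.exp B := by
    intro x hx
    have hexp : Real.exp (I x) ≤ Real.exp B :=
      Real.exp_le_exp.2 ((le_abs_self _).trans (hIB x hx))
    have hw : w x / γ ≤ W / γ := div_le_div_of_nonneg_right (hW ⟨x, hx, rfl⟩) hγ.le
    have hw0 : 0 ≤ w x / γ := (div_pos (h.pos (hsub (Ioo_subset_Ico_self hx))) hγ).le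
    nlinarith [div_pos hlam hγ, Real.exp_pos (I x)]
  obtain ⟨m, hm⟩ := nonempty_Ioo.2 hcq
  have hW0 : 0 ≤ W / γ * Real.exp B := by
    have := (h.pos (hsub (Ioo_subset_Ico_self hm))).le.trans (hW ⟨m, hm, rfl⟩)
    positivity
  have hPlow : ∀ s ∈ Ioo m q, P m - W / γ * Real.exp B * (q - m) ≤ P s := fun s hs => by
    have := (convex_Ioo c q).image_sub_le_mul_sub_of_hasDerivAt_le (f := fun s => -P s)
      (fun x hx => (hP x hx).neg) hP'le hm ⟨hm.1.trans hs.1, hs.2⟩ hs.1.le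
    nlinarith [mul_le_mul_of_nonneg_left (sub_le_sub_right hs.2.le m) hW0]
  have hPbot : Tendsto P (𝓝[<] q) atBot := by
    refine tendsto_atBot_mono' _ ?_ (hv.atBot_mul_const (Real.exp_pos (-B)))
    filter_upwards [hv.eventually (eventually_le_atBot 0), Ioo_mem_nhdsLT hcq] with s hs0 hs
    exact mul_le_mul_of_nonpos_left (Real.exp_le_exp.2 (neg_le_of_abs_le (hIB s hs))) hs0
  obtain ⟨s, hPs, hs⟩ :=
    ((hPbot.eventually (eventually_lt_atBot _)).and (Ioo_mem_nhdsLT hm.2)).exists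
  exact (hPlow s hs).not_gt hPs

theorem IsMaxLKSSol.tendsto_integral_v_atBot (h : IsMaxLKSSol a σ γ lam sm q w v) (hγ : 0 < γ)
    (hlam : 0 < lam) {s₀ : ℝ} (hs₀ : sm < s₀) (hs₀q : s₀ < q) :
    Tendsto (fun s => ∫ τ in s₀..s, v τ) (𝓝[<] q) atBot := by
  have hv := h.tendsto_v_atBot hγ hlam hs₀ hs₀q
  obtain ⟨l, hlq, hl⟩ :=
    mem_nhdsLT_iff_exists_Ioo_subset.1 (hv.eventually (eventually_le_atBot 0))
  obtain ⟨c, hc, hcq⟩ := exists_between (max_lt hs₀q hlq)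
  have hcsm : sm < c := hs₀.trans (EReal.coe_lt_coe_iff.2 ((le_max_left _ _).trans_lt hc))
  have hsub := Ico_subset_coe_preimage_Ioo (q := q) hcsm
  have hanti : AntitoneOn (fun s => ∫ τ in c..s, v τ) (Ico c q) := fun x hx y hy hxy => by
    have := (convex_Ico c q).image_sub_le_mul_sub_of_hasDerivAt_le (C := 0)
      (fun t ht => h.1.hasDerivAt_integral_v (hsub (left_mem_Ico.2 hcq)) (hsub ht))
      (fun t ht => hl ⟨(le_max_right _ _).trans_lt (hc.trans_le ht.1), ht.2⟩) hx hy hxy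
    simpa using this
  have hnb : ¬ BddBelow ((fun s => ∫ τ in c..s, v τ) '' Ioo c q) := fun hb =>
    h.1.not_isBounded_image_integral hγ hlam hcsm hcq hv <| isBounded_iff_bddBelow_bddAbove.2
      ⟨hb, ⟨0, by
        rintro _ ⟨s, hs, rfl⟩
        simpa using hanti (left_mem_Ico.2 hcq) (Ioo_subset_Ico_self hs) hs.1.le⟩⟩
  have hc_tendsto : Tendsto (fun s => ∫ τ in c..s, v τ) (𝓝[<] q) atBot :=
    tendsto_atBot.2 fun M => by
      obtain ⟨_, ⟨t, ht, rfl⟩, hMt⟩ := not_bddBelow_iff.1 hnb M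
      filter_upwards [Ioo_mem_nhdsLT ht.2] with s hs
      exact (hanti (Ioo_subset_Ico_self ht) ⟨(ht.1.trans hs.1).le, hs.2⟩ hs.1.le).trans hMt.le
  refine (tendsto_atBot_add_const_left _ (∫ τ in s₀..c, v τ) hc_tendsto).congr' ?_
  filter_upwards [Ioo_mem_nhdsLT hcq] with s hs
  have hs₀' : ↑s₀ ∈ Ioo sm (q : EReal) := ⟨hs₀, EReal.coe_lt_coe_iff.2 hs₀q⟩
  exact intervalIntegral.integral_add_adjacent_intervals
    (h.1.intervalIntegrable_v hs₀' (hsub (left_mem_Ico.2 hcq)))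
    (h.1.intervalIntegrable_v (hsub (left_mem_Ico.2 hcq)) (hsub (Ioo_subset_Ico_self hs)))

end Blowup

theorem stmt10_general (a σ γ lam : ℝ) (ha : 0 < a) (hγ : 0 < γ) (hlam : 0 < lam)
    (sm : EReal) (spr : ℝ) (w v : ℝ → ℝ)
    (hsol : IsMaxLKSSol a σ γ lam sm (spr : EReal) w v)
    (s0 : ℝ) (hs0m : sm < (s0 : EReal)) (hs0p : s0 < spr)
    (S0 : ℝ) :
    Tendsto (fun s => S0 * Real.exp (∫ τ in s0..s, v τ)) (𝓝[<] spr) (𝓝 0) ∧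
    Tendsto (fun s => w s * (S0 * Real.exp (∫ τ in s0..s, v τ))) (𝓝[<] spr) (𝓝 0) := by
  have hI := hsol.tendsto_integral_v_atBot hγ hlam hs0m hs0p
  refine ⟨by simpa using (Real.tendsto_exp_atBot.comp hI).const_mul S0, ?_⟩
  have hexp : Tendsto (fun s => a * (∫ τ in s0..s, v τ) + -(σ * (s - s0))) (𝓝[<] spr) atBot :=
    (hI.const_mul_atBot ha).atBot_add
      ((by fun_prop : Continuous fun s : ℝ => -(σ * (s - s0))).tendsto spr |>.mono_left
        nhdsWithin_le_nhds)
  have hu : (fun s => w s0 * S0 * Real.exp (a * (∫ τ in s0..s, v τ) + -(σ * (s - s0))))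
      =ᶠ[𝓝[<] spr] fun s => w s * (S0 * Real.exp (∫ τ in s0..s, v τ)) := by
    filter_upwards [Ioo_mem_nhdsLT hs0p] with s hs
    rw [hsol.1.w_eq (Ico_subset_coe_preimage_Ioo hs0m (left_mem_Ico.2 hs0p))
      (Ico_subset_coe_preimage_Ioo hs0m (Ioo_subset_Ico_self hs)),
      show a * (∫ τ in s0..s, v τ) + -(σ * (s - s0))
        = ((a - 1) * (∫ τ in s0..s, v τ) - σ * (s - s0)) + ∫ τ in s0..s, v τ by ring,
      Real.exp_add]
    ring
  simpa using ((Real.tendsto_exp_atBot.comp hexp).const_mul (w s0 * S0)).congr' hu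

/-- If `(w, v)` is a maximal positive solution of (LKS) on
`(s₋, s₊)` with `s₊ < +∞`, and `S(s) = S₀ exp(∫_{s₀}^s v)`, `u = w·S`, then
`S → 0` and `u → 0` as `s → s₊⁻`. -/
theorem stmt10 (a σ γ lam : ℝ) (ha : 0 < a) (hσ : 0 < σ) (hγ : 0 < γ) (hlam : 0 < lam)
    (sm : EReal) (spr : ℝ) (w v : ℝ → ℝ)
    (hsol : IsMaxLKSSol a σ γ lam sm (spr : EReal) w v)
    (s0 : ℝ) (hs0m : sm < (s0 : EReal)) (hs0p : s0 < spr)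
    (S0 : ℝ) (hS0 : 0 < S0) :
    Tendsto (fun s => S0 * Real.exp (∫ τ in s0..s, v τ)) (𝓝[<] spr) (𝓝 0) ∧
    Tendsto (fun s => w s * (S0 * Real.exp (∫ τ in s0..s, v τ))) (𝓝[<] spr) (𝓝 0) :=
  stmt10_general a σ γ lam ha hγ hlam sm spr w v hsol s0 hs0m hs0p S0
end
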